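/- arXiv:1901.00838 — 2 statements merged into one kernel-verified Lean document; each statement's English description precedes it below -/
import Mathlib

section
/- Consider the zero-sum game on ℝ² with cost f(x,y) = (1/2)(x² + 2xy + (1/10)y²), whose simultaneous-gradient vector field is ω(x,y) = (x + y, -(x + (1/10)y)). Then: (i) ω(x,y) = 0 if and only if (x,y) = (0,0); (ii) (0,0) is not a local Nash equilibrium of the game: for every δ > 0 there exists y with |y| < δ and f(0,y) > f(0,0); and (iii) every eigenvalue of the matrix !![1, 1; -1, -1/10] (the Jacobian of ω, which is constant) has strictly positive real part, so (0,0) is a locally asymptotically stable equilibrium of the gradient dynamics ż = -ω(z). -/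
open Matrix

/-- The cost of the counterexample game of Appendix B. -/
noncomputable def fCounter (x y : ℝ) : ℝ := (1 / 2) * (x ^ 2 + 2 * x * y + (1 / 10) * y ^ 2)

/-- The simultaneous-gradient vector field of the counterexample game. -/
noncomputable def ωCounter (p : ℝ × ℝ) : ℝ × ℝ := (p.1 + p.2, -(p.1 + (1 / 10) * p.2))

/-! A real 2 × 2 matrix with positive trace and determinant has characteristic polynomial
`X² - t X + d` with `t, d > 0`. A non-real root has real part `t / 2`, and a real root `a`
satisfies `a (t - a) = d > 0`, forcing `0 < a < t`. -/

theorem Complex.re_pos_of_sq_sub_mul_add_eq_zero {t d : ℝ} (ht : 0 < t) (hd : 0 < d) {z : ℂ}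
    (hz : z ^ 2 - t * z + d = 0) : 0 < z.re := by
  have hre : z.re ^ 2 - z.im ^ 2 - t * z.re + d = 0 := by
    simpa [pow_two] using congrArg Complex.re hz
  have him : (2 * z.re - t) * z.im = 0 := by
    have := congrArg Complex.im hz
    simp only [pow_two, sub_im, add_im, mul_im, ofReal_re, ofReal_im, zero_im] at this
    linear_combination this
  rcases mul_eq_zero.mp him with hhalf | hreal
  · linarith
  · rw [hreal] at hre
    nlinarith

theorem Matrix.re_pos_of_mem_spectrum_map_ofReal {A : Matrix (Fin 2) (Fin 2) ℝ}
    (ht : 0 < A.trace) (hd : 0 < A.det) {μ : ℂ}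
    (hμ : μ ∈ spectrum ℂ (A.map Complex.ofReal)) : 0 < μ.re := by
  rw [mem_spectrum_iff_isRoot_charpoly, charpoly_fin_two, Polynomial.IsRoot.def] at hμ
  simp only [Polynomial.eval_add, Polynomial.eval_sub, Polynomial.eval_pow, Polynomial.eval_mul,
    Polynomial.eval_C, Polynomial.eval_X] at hμ
  have htrace : (A.map Complex.ofReal).trace = A.trace := by simp [trace_fin_two]
  have hdet : (A.map Complex.ofReal).det = A.det := by simp [det_fin_two]
  rw [htrace, hdet] at hμ
  exact Complex.re_pos_of_sq_sub_mul_add_eq_zero ht hd hμ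

theorem ωCounter_eq_zero_iff (p : ℝ × ℝ) : ωCounter p = 0 ↔ p = 0 := by
  constructor
  · intro h
    have h₁ : p.1 + p.2 = 0 := congrArg Prod.fst h
    have h₂ : -(p.1 + 1 / 10 * p.2) = 0 := congrArg Prod.snd h
    ext <;> simp only [Prod.fst_zero, Prod.snd_zero] <;> linarith
  · rintro rfl
    simp [ωCounter]

theorem fCounter_zero_left (y : ℝ) : fCounter 0 y = y ^ 2 / 20 := by
  simp only [fCounter]
  ring

/-- Appendix B counterexample: the origin is the unique critical point of the gradient
dynamics, it is not a local Nash equilibrium, yet it is a locally asymptotically stable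
equilibrium of the gradient dynamics. -/
theorem stmt_5 :
    (∀ p : ℝ × ℝ, ωCounter p = 0 ↔ p = 0) ∧
    (∀ δ : ℝ, 0 < δ → ∃ y : ℝ, |y| < δ ∧ fCounter 0 y > fCounter 0 0) ∧
    (∀ μ ∈ spectrum ℂ
        ((!![1, 1; -1, -1/10] : Matrix (Fin 2) (Fin 2) ℝ).map Complex.ofReal),
      0 < μ.re) := by
  refine ⟨ωCounter_eq_zero_iff, fun δ hδ => ⟨δ / 2, ?_, ?_⟩, fun μ hμ => ?_⟩
  · rw [abs_of_pos (half_pos hδ)]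
    exact half_lt_self hδ
  · norm_num only [fCounter_zero_left]
    positivity
  · exact re_pos_of_mem_spectrum_map_ofReal (by norm_num [trace_fin_two])
      (by norm_num [det_fin_two]) hμ
end

section
/- Under the stated assumptions on ω, J, λ and h, let λ₁ : ℝ^d → ℝ be continuously differentiable with 0 ≤ λ₁(z) for all z and λ₁(z) = 0 ⟺ ω(z) = 0, let u : ℝ → ℝ^d be any function, and define the time-varying vector field h_TV(z,t) = h(z) + λ₁(z)·u(t). Let z* ∈ ℝ^d satisfy ω(z*) = 0 and suppose J(z*) is invertible. Then for every t ∈ ℝ, the map z ↦ h_TV(z,t) is differentiable at z* and its Jacobian matrix at z* equals (1/2)(J(z*) + Jᵀ(z*)); in particular the Jacobian at z* is independent of t and is a symmetric matrix, so all of its eigenvalues are real. -/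
/-!
At a root `z*` of `ω` also `λ(z*) = 0`, so `h = ½ (ω + B ω)` with `B = Jᵀ (JᵀJ + λI)⁻¹ Jᵀ`
and `B(z*) J(z*) = J(z*)ᵀ`. Because `ω(z*) = 0`, the product rule for `B ω` at `z*` needs only
the continuity of `B`, never a derivative of `J` or `λ`; this gives the Jacobian `½ (J + Jᵀ)`.
The term `λ₁(z) u(t)` contributes nothing, since `λ₁ ≥ 0` attains its minimum `0` at `z*`.
A real symmetric matrix is Hermitian over `ℂ`, so its spectrum is real.
-/

open Matrix Asymptotics Filter Topology

theorem Matrix.IsSymm.im_eq_zero_of_mem_spectrum_map_ofReal {n : Type*} [Fintype n]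
    [DecidableEq n] {A : Matrix n n ℝ} (hA : A.IsSymm) {μ : ℂ}
    (hμ : μ ∈ spectrum ℂ (A.map Complex.ofReal)) : μ.im = 0 := by
  have hherm : (A.map Complex.ofReal).IsHermitian :=
    (isHermitian_iff_isSymm.2 hA).map _ fun x => (Complex.conj_ofReal x).symm
  obtain ⟨x, -, rfl⟩ := hherm.spectrum_eq_image_range ▸ hμ
  exact Complex.ofReal_im x

section

variable {𝕜 E F G : Type*} [NontriviallyNormedField 𝕜] [NormedAddCommGroup E] [NormedSpace 𝕜 E]
  [NormedAddCommGroup F] [NormedSpace 𝕜 F] [NormedAddCommGroup G] [NormedSpace 𝕜 G]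

/-- `B` need only be continuous, since `(B z - B x) (f z) = o(1) · O(z - x)`. -/
theorem HasFDerivAt.clm_apply_of_eq_zero {B : E → F →L[𝕜] G} {f : E → F} {f' : E →L[𝕜] F}
    {x : E} (hB : ContinuousAt B x) (hf : HasFDerivAt f f' x) (hfx : f x = 0) :
    HasFDerivAt (fun z => B z (f z)) ((B x).comp f') x := by
  have hBo : (fun z => ‖B z - B x‖) =o[𝓝 x] (fun _ => (1 : ℝ)) :=
    ((isLittleO_one_iff ℝ).2 (tendsto_sub_nhds_zero_iff.2 hB)).norm_left
  have hfO : (fun z => ‖f z‖) =O[𝓝 x] (fun z => ‖z - x‖) := by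
    simpa [hfx] using hf.isBigO_sub.norm_norm
  have hvar : (fun z => (B z - B x) (f z)) =o[𝓝 x] (fun z => z - x) := by
    refine isBoundedBilinearMap_apply.isBigO_comp.trans_isLittleO ?_
    simpa using (hBo.mul_isBigO hfO).norm_right
  refine HasFDerivAt.of_isLittleO ?_
  refine (hvar.add ((B x).isBigO_comp _ _ |>.trans_isLittleO hf.isLittleO)).congr_left fun z => ?_
  simp [hfx]

end

section

variable {𝕜 E : Type*} [NontriviallyNormedField 𝕜] [CompleteSpace 𝕜] [NormedAddCommGroup E]
  [NormedSpace 𝕜 E] {m n : Type*} [Fintype m] [Fintype n] [DecidableEq n]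

theorem continuous_of_hasFDerivAt_mulVecLin {ω : (n → 𝕜) → m → 𝕜} {J : (n → 𝕜) → Matrix m n 𝕜}
    (hω : ContDiff 𝕜 1 ω)
    (hJ : ∀ z, HasFDerivAt ω (LinearMap.toContinuousLinearMap (J z).mulVecLin) z) :
    Continuous J := by
  have hfd : Continuous (fderiv 𝕜 ω) := hω.continuous_fderiv one_ne_zero
  refine continuous_matrix fun i j => ?_
  have hJij : (fun z => J z i j) = fun z => fderiv 𝕜 ω z (Pi.single j 1) i := by
    funext z
    simp [(hJ z).fderiv, Matrix.mulVec_single]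
  rw [hJij]
  exact (continuous_apply i).comp (hfd.clm_apply continuous_const)

theorem continuous_toContinuousLinearMap_mulVecLin :
    Continuous fun A : Matrix m n 𝕜 => LinearMap.toContinuousLinearMap A.mulVecLin :=
  LinearMap.continuous_of_finiteDimensional
    ((LinearMap.toContinuousLinearMap : ((n → 𝕜) →ₗ[𝕜] (m → 𝕜)) ≃ₗ[𝕜] _).toLinearMap ∘ₗ
      Matrix.toLin'.toLinearMap)

theorem HasFDerivAt.matrix_mulVec_of_eq_zero {A : E → Matrix m n 𝕜} {f : E → n → 𝕜}
    {f' : E →L[𝕜] n → 𝕜} {x : E} (hA : ContinuousAt A x) (hf : HasFDerivAt f f' x)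
    (hfx : f x = 0) :
    HasFDerivAt (fun z => A z *ᵥ f z)
      ((LinearMap.toContinuousLinearMap (A x).mulVecLin).comp f') x :=
  HasFDerivAt.clm_apply_of_eq_zero (B := fun z => LinearMap.toContinuousLinearMap (A z).mulVecLin)
    (continuous_toContinuousLinearMap_mulVecLin.continuousAt.comp hA) hf hfx

theorem hasFDerivAt_transpose_mulVec_regularized_inv_mulVec {ω : (n → 𝕜) → n → 𝕜}
    {J : (n → 𝕜) → Matrix n n 𝕜} {lam : (n → 𝕜) → 𝕜} {x : n → 𝕜} (hJc : Continuous J)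
    (hlam : Continuous lam) (hJ : HasFDerivAt ω (LinearMap.toContinuousLinearMap (J x).mulVecLin) x)
    (hωx : ω x = 0) (hlamx : lam x = 0) (hJx : IsUnit (J x)) :
    HasFDerivAt (fun z => (J z)ᵀ *ᵥ (((J z)ᵀ * J z + lam z • 1)⁻¹ *ᵥ ((J z)ᵀ *ᵥ ω z)))
      (LinearMap.toContinuousLinearMap (J x)ᵀ.mulVecLin) x := by
  set M := fun z => (J z)ᵀ * J z + lam z • (1 : Matrix n n 𝕜)
  have hMx : M x = (J x)ᵀ * J x := by simp [M, hlamx]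
  have hdetM : IsUnit (M x).det := by
    rw [hMx, det_mul, det_transpose]
    exact ((isUnit_iff_isUnit_det _).1 hJx).mul ((isUnit_iff_isUnit_det _).1 hJx)
  have hMinv : ContinuousAt (fun z => (M z)⁻¹) x :=
    (continuousAt_matrix_inv _ (NormedRing.inverse_continuousAt hdetM.unit)).comp
      ((hJc.matrix_transpose.matrix_mul hJc).add (hlam.smul continuous_const)).continuousAt
  have hB := HasFDerivAt.matrix_mulVec_of_eq_zero (A := fun z => (J z)ᵀ * ((M z)⁻¹ * (J z)ᵀ))
    (hJc.matrix_transpose.continuousAt.mul (hMinv.mul hJc.matrix_transpose.continuousAt)) hJ hωx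
  have hBJ : (J x)ᵀ * ((M x)⁻¹ * (J x)ᵀ) * J x = (J x)ᵀ := by
    rw [Matrix.mul_assoc, Matrix.mul_assoc, ← hMx, nonsing_inv_mul _ hdetM, Matrix.mul_one]
  refine (hB.congr_fderiv ?_).congr_of_eventuallyEq (Eventually.of_forall fun z => ?_)
  · ext y i
    simp only [ContinuousLinearMap.comp_apply, LinearMap.coe_toContinuousLinearMap',
      mulVecLin_apply, mulVec_mulVec, hBJ]
  · simp only [M, mulVec_mulVec]

end

theorem IsLocalMin.hasFDerivAt_smul_const_eq_zero {E F : Type*} [NormedAddCommGroup E]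
    [NormedSpace ℝ E] [NormedAddCommGroup F] [NormedSpace ℝ F] {g : E → ℝ} {x : E}
    (hmin : IsLocalMin g x) (hg : DifferentiableAt ℝ g x) (v : F) :
    HasFDerivAt (fun z => g z • v) (0 : E →L[ℝ] F) x := by
  simpa [hmin.fderiv_eq_zero] using hg.hasFDerivAt.smul_const v

theorem stmt_11_general {d : ℕ}
    (ω : (Fin d → ℝ) → (Fin d → ℝ))
    (J : (Fin d → ℝ) → Matrix (Fin d) (Fin d) ℝ)
    (lam : (Fin d → ℝ) → ℝ)
    (hω : ContDiff ℝ 2 ω)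
    (hJ : ∀ z, HasFDerivAt ω (LinearMap.toContinuousLinearMap (Matrix.mulVecLin (J z))) z)
    (hlamC1 : ContDiff ℝ 1 lam)
    (hlam_zero : ∀ z, lam z = 0 ↔ ω z = 0)
    (h : (Fin d → ℝ) → (Fin d → ℝ))
    (hdef : ∀ z, h z = (1 / 2 : ℝ) •
      (ω z + ((J z)ᵀ).mulVec ((((J z)ᵀ * J z + lam z • (1 : Matrix (Fin d) (Fin d) ℝ))⁻¹).mulVec
        (((J z)ᵀ).mulVec (ω z)))))
    (lam1 : (Fin d → ℝ) → ℝ)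
    (hlam1C1 : ContDiff ℝ 1 lam1)
    (hlam1_nonneg : ∀ z, 0 ≤ lam1 z)
    (hlam1_zero : ∀ z, lam1 z = 0 ↔ ω z = 0)
    (u : ℝ → (Fin d → ℝ))
    (zs : Fin d → ℝ)
    (hcrit : ω zs = 0)
    (hJinv : IsUnit (J zs)) :
    (∀ t : ℝ, HasFDerivAt (fun z => h z + lam1 z • u t)
      (LinearMap.toContinuousLinearMap
        (Matrix.mulVecLin ((1 / 2 : ℝ) • (J zs + (J zs)ᵀ)))) zs) ∧
    ((1 / 2 : ℝ) • (J zs + (J zs)ᵀ)).IsSymm ∧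
    (∀ μ ∈ spectrum ℂ
        (((1 / 2 : ℝ) • (J zs + (J zs)ᵀ)).map Complex.ofReal), μ.im = 0) := by
  have hsymm : ((1 / 2 : ℝ) • (J zs + (J zs)ᵀ)).IsSymm := by
    simp only [Matrix.IsSymm, transpose_smul, transpose_add, transpose_transpose, add_comm]
  refine ⟨fun t => ?_, hsymm, fun μ => hsymm.im_eq_zero_of_mem_spectrum_map_ofReal⟩
  have hJc : Continuous J := continuous_of_hasFDerivAt_mulVecLin (hω.of_le (by norm_num)) hJ
  have hB := hasFDerivAt_transpose_mulVec_regularized_inv_mulVec hJc hlamC1.continuous (hJ zs)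
    hcrit ((hlam_zero zs).2 hcrit) hJinv
  have hmin : IsLocalMin lam1 zs :=
    Eventually.of_forall fun z => ((hlam1_zero zs).2 hcrit).symm ▸ hlam1_nonneg z
  have hterm := hmin.hasFDerivAt_smul_const_eq_zero (hlam1C1.differentiable one_ne_zero zs) (u t)
  have htot := (((hJ zs).add hB).const_smul (1 / 2 : ℝ)).add hterm
  refine (htot.congr_fderiv ?_).congr_of_eventuallyEq (Eventually.of_forall fun z => ?_)
  · ext y i
    simp only [_root_.add_apply, FunLike.coe_smul, Pi.smul_apply,
      LinearMap.coe_toContinuousLinearMap', mulVecLin_apply, add_zero, smul_mulVec, add_mulVec]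
  · simp only [hdef]
    rfl

/-- Jacobian claim of Theorem 3 (Appendix A): at a critical point `z*` of `ω` where `J(z*)`
is invertible, the Jacobian of the time-varying adjusted field `h_TV(·, t) = h + λ₁(·)·u(t)`
is, for every `t`, the symmetric matrix `(1/2)(J(z*) + J(z*)ᵀ)`, whose eigenvalues are all
real. -/
theorem stmt_11 {d : ℕ}
    (ω : (Fin d → ℝ) → (Fin d → ℝ))
    (J : (Fin d → ℝ) → Matrix (Fin d) (Fin d) ℝ)
    (lam : (Fin d → ℝ) → ℝ)
    (hω : ContDiff ℝ 2 ω)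
    (hJ : ∀ z, HasFDerivAt ω (LinearMap.toContinuousLinearMap (Matrix.mulVecLin (J z))) z)
    (hlamC1 : ContDiff ℝ 1 lam)
    (hlam_nonneg : ∀ z, 0 ≤ lam z)
    (hlam_zero : ∀ z, lam z = 0 ↔ ω z = 0)
    (hinv : ∀ z, IsUnit ((J z)ᵀ * J z + lam z • (1 : Matrix (Fin d) (Fin d) ℝ)))
    (h : (Fin d → ℝ) → (Fin d → ℝ))
    (hdef : ∀ z, h z = (1 / 2 : ℝ) •
      (ω z + ((J z)ᵀ).mulVec ((((J z)ᵀ * J z + lam z • (1 : Matrix (Fin d) (Fin d) ℝ))⁻¹).mulVec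
        (((J z)ᵀ).mulVec (ω z)))))
    (lam1 : (Fin d → ℝ) → ℝ)
    (hlam1C1 : ContDiff ℝ 1 lam1)
    (hlam1_nonneg : ∀ z, 0 ≤ lam1 z)
    (hlam1_zero : ∀ z, lam1 z = 0 ↔ ω z = 0)
    (u : ℝ → (Fin d → ℝ))
    (zs : Fin d → ℝ)
    (hcrit : ω zs = 0)
    (hJinv : IsUnit (J zs)) :
    (∀ t : ℝ, HasFDerivAt (fun z => h z + lam1 z • u t)
      (LinearMap.toContinuousLinearMap
        (Matrix.mulVecLin ((1 / 2 : ℝ) • (J zs + (J zs)ᵀ)))) zs) ∧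
    ((1 / 2 : ℝ) • (J zs + (J zs)ᵀ)).IsSymm ∧
    (∀ μ ∈ spectrum ℂ
        (((1 / 2 : ℝ) • (J zs + (J zs)ᵀ)).map Complex.ofReal), μ.im = 0) :=
  stmt_11_general ω J lam hω hJ hlamC1 hlam_zero h hdef lam1 hlam1C1 hlam1_nonneg hlam1_zero u zs
    hcrit hJinv
end
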